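/- Let π : H → ℤ be any function satisfying π(t^p · b^q · ι(w)) = q for all p, q ∈ ℤ and all w ∈ F₂ not beginning with b^{±1}. Then for every u ∈ H, either π(u · bⁿ) = π(u) + n for all n ∈ ℤ (the restriction of π to the coset u⟨b⟩ is a translation), or π(u · bⁿ) = π(u) for all n ∈ ℤ (the restriction is constant). Moreover, for u = 1 the first alternative holds, i.e. π(bⁿ) = n for all n ∈ ℤ. -/

import Mathlib

/-!
Conjugation by `t` restricts to the automorphism `a ↦ b·a, b ↦ b` of `ι(F₂)`, so `ι(F₂)` is
normalised by `t` and every element of `H` is `t^p · ι(v)`; splitting the leading `b`-syllable off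
`v` gives `t^p · b^q · ι(w)` with `w` not beginning with `b^{±1}`. Multiplying on the right by `bⁿ`
either merges into `b^q` (when `w = 1`, so `π` shifts by `n`), or only changes the trailing
`b`-syllable of the nonempty reduced word of `w`, which keeps its first letter and hence the value
of `π`.
-/

/-- Generators of `H`: `a = 0`, `b = 1`, `t = 2`.
Relators: `t·b·t⁻¹·b⁻¹` and `t·a·t⁻¹·a⁻¹·b⁻¹`. -/
def hRels : Set (FreeGroup (Fin 3)) :=
  { FreeGroup.of (2 : Fin 3) * FreeGroup.of (1 : Fin 3) * (FreeGroup.of (2 : Fin 3))⁻¹ *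
      (FreeGroup.of (1 : Fin 3))⁻¹,
    FreeGroup.of (2 : Fin 3) * FreeGroup.of (0 : Fin 3) * (FreeGroup.of (2 : Fin 3))⁻¹ *
      (FreeGroup.of (0 : Fin 3))⁻¹ * (FreeGroup.of (1 : Fin 3))⁻¹ }

/-- The group `H = ⟨a, b, t ∣ t·b·t⁻¹ = b, t·a·t⁻¹ = b·a⟩`. -/
abbrev HGrp : Type := PresentedGroup hRels

/-- The image of the generator `a` in `H`. -/
def aH : HGrp := PresentedGroup.of 0
/-- The image of the generator `b` in `H`. -/
def bH : HGrp := PresentedGroup.of 1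
/-- The image of the generator `t` in `H`. -/
def tH : HGrp := PresentedGroup.of 2

/-- The free group on two generators `a = 0`, `b = 1`. -/
abbrev F₂ : Type := FreeGroup (Fin 2)

/-- `w ∈ F₂` does not begin with `b` or `b⁻¹`: the first letter of its reduced word
(if any) is not the generator `b = 1`. -/
def NoLeadB (w : F₂) : Prop := ∀ l ∈ w.toWord.head?, l.1 ≠ (1 : Fin 2)

/-- The homomorphism `ι : F₂ →* H` sending the generators `a`, `b` of `F₂` to the
elements `a`, `b` of `H`. -/
def ι : F₂ →* HGrp := FreeGroup.lift (fun i => if i = 0 then aH else bH)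

namespace FreeGroup

variable {α : Type*} [DecidableEq α] (c : α)

theorem fst_eq_of_mem_toWord_zpow_of {n : ℤ} {l : α × Bool} (hl : l ∈ (of c ^ n).toWord) :
    l.1 = c := by
  induction n using Int.induction_on generalizing l with
  | zero => simp at hl
  | succ n ih =>
    rw [zpow_add_one] at hl
    rcases List.mem_append.mp ((toWord_mul_sublist _ _).subset hl) with h | h
    · exact ih h
    · simp_all [toWord_of]
  | pred n ih =>
    rw [zpow_sub_one] at hl
    rcases List.mem_append.mp ((toWord_mul_sublist _ _).subset hl) with h | h
    · exact ih h
    · simp_all [toWord_inv, toWord_of, invRev]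

theorem toWord_mul_zpow_of {x : FreeGroup α} (hx : ∀ l ∈ x.toWord.getLast?, l.1 ≠ c) (n : ℤ) :
    (x * of c ^ n).toWord = x.toWord ++ (of c ^ n).toWord := by
  rw [toWord_mul, IsReduced.reduce_eq]
  refine List.isChain_append.mpr ⟨isReduced_toWord, isReduced_toWord, fun l hl m hm h => ?_⟩
  exact absurd (h.trans (fst_eq_of_mem_toWord_zpow_of c (List.mem_of_mem_head? hm))) (hx l hl)

theorem exists_mk_eq_zpow_of_mul {L : List (α × Bool)} (hL : IsReduced L) :
    ∃ (q : ℤ) (y : FreeGroup α), (∀ l ∈ y.toWord.head?, l.1 ≠ c) ∧ mk L = of c ^ q * y := by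
  induction L with
  | nil => exact ⟨0, 1, by simp, by simp [one_eq_mk]⟩
  | cons l L ih =>
    by_cases hl : l.1 = c
    · obtain ⟨q, y, hy, hLy⟩ := ih hL.tail
      obtain ⟨d, s⟩ := l
      subst hl
      refine ⟨(if s then 1 else -1) + q, y, hy, ?_⟩
      rw [zpow_add, mul_assoc, ← hLy, ← List.singleton_append, ← mul_mk]
      cases s <;> simp [of, inv_mk, invRev]
    · refine ⟨0, mk (l :: L), ?_, by simp⟩
      rw [toWord_mk, hL.reduce_eq]
      simpa using hl

theorem head?_toWord_mul_zpow_of {w : FreeGroup α} (hw : w ≠ 1)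
    (h : ∀ l ∈ w.toWord.head?, l.1 ≠ c) (n : ℤ) :
    (w * of c ^ n).toWord.head? = w.toWord.head? := by
  -- Write `w = y⁻¹ * of c ^ (-q)` with `y⁻¹` not ending in `c`: both words are then the word of
  -- `y⁻¹` followed by a `c`-syllable, and the word of `y⁻¹` is nonempty since `w` starts with no `c`.
  obtain ⟨q, y, hy, hwy⟩ := exists_mk_eq_zpow_of_mul c (isReduced_toWord (x := w⁻¹))
  rw [mk_toWord, inv_eq_iff_eq_inv, mul_inv_rev, ← zpow_neg] at hwy
  have hlast : ∀ l ∈ y⁻¹.toWord.getLast?, l.1 ≠ c := by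
    rw [toWord_inv, invRev, List.getLast?_reverse, List.head?_map]
    simp only [Option.mem_def, Option.map_eq_some_iff]
    rintro _ ⟨l, hl, rfl⟩
    exact hy l hl
  have hy1 : y⁻¹.toWord ≠ [] := by
    intro hnil
    rcases hw' : w.toWord with _ | ⟨l, L⟩
    · exact hw (toWord_eq_nil_iff.mp hw')
    refine h l (by simp [hw']) (fst_eq_of_mem_toWord_zpow_of c (n := -q) ?_)
    rw [hwy, toWord_mul_zpow_of c hlast, hnil, List.nil_append] at hw'
    rw [hw']
    exact List.mem_cons_self
  rw [hwy, mul_assoc, ← zpow_add, toWord_mul_zpow_of c hlast, toWord_mul_zpow_of c hlast,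
    List.head?_append_of_ne_nil _ hy1, List.head?_append_of_ne_nil _ hy1]

end FreeGroup

open FreeGroup

theorem tH_mul_bH_mul_inv : tH * bH * tH⁻¹ = bH := by
  have h : tH * bH * tH⁻¹ * bH⁻¹ = 1 := PresentedGroup.one_of_mem (Set.mem_insert _ _)
  exact mul_inv_eq_one.mp h

theorem tH_mul_aH_mul_inv : tH * aH * tH⁻¹ = bH * aH := by
  have h : tH * aH * tH⁻¹ * aH⁻¹ * bH⁻¹ = 1 :=
    PresentedGroup.one_of_mem (Set.mem_insert_of_mem _ rfl)
  rwa [mul_inv_eq_one, mul_inv_eq_iff_eq_mul] at h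

@[simp] theorem ι_of_zero : ι (of 0) = aH := by simp [ι]
@[simp] theorem ι_of_one : ι (of 1) = bH := by simp [ι]

def tConj : F₂ →* F₂ := FreeGroup.lift fun i => if i = 0 then of 1 * of 0 else of 1

theorem ι_comp_tConj : ι.comp tConj = (MulAut.conj tH : HGrp →* HGrp).comp ι := by
  ext i
  fin_cases i
  · simp [tConj, tH_mul_aH_mul_inv]
  · simp [tConj, tH_mul_bH_mul_inv]

theorem tConj_range : tConj.range = ⊤ := by
  rw [eq_top_iff, ← closure_range_of, Subgroup.closure_le]
  rintro _ ⟨i, rfl⟩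
  fin_cases i
  · exact ⟨(of 1)⁻¹ * of 0, by simp [tConj]⟩
  · exact ⟨of 1, by simp [tConj]⟩

theorem tH_mem_normalizer_range_ι : tH ∈ Subgroup.normalizer (ι.range : Set HGrp) := by
  rw [Subgroup.mem_normalizer_iff_map_conj_eq, ← MonoidHom.range_comp, ← ι_comp_tConj,
    MonoidHom.range_comp, tConj_range, ← MonoidHom.range_eq_map]

theorem exists_eq_tH_zpow_mul_ι (u : HGrp) : ∃ (p : ℤ) (v : F₂), u = tH ^ p * ι v := by
  have htop : Subgroup.zpowers tH ⊔ ι.range = ⊤ := by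
    rw [eq_top_iff, ← PresentedGroup.closure_range_of, Subgroup.closure_le]
    rintro _ ⟨i, rfl⟩
    fin_cases i
    · exact Subgroup.mem_sup_right ⟨of 0, ι_of_zero⟩
    · exact Subgroup.mem_sup_right ⟨of 1, ι_of_one⟩
    · exact Subgroup.mem_sup_left (Subgroup.mem_zpowers tH)
  have hu : u ∈ (↑(Subgroup.zpowers tH ⊔ ι.range) : Set HGrp) := by simp [htop]
  rw [Subgroup.coe_mul_of_left_le_normalizer_right _ _
    (Subgroup.zpowers_le.mpr tH_mem_normalizer_range_ι)] at hu
  obtain ⟨_, ⟨p, rfl⟩, _, ⟨v, rfl⟩, rfl⟩ := hu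
  exact ⟨p, v, rfl⟩

theorem exists_normal_form (u : HGrp) :
    ∃ (p q : ℤ) (w : F₂), NoLeadB w ∧ u = tH ^ p * bH ^ q * ι w := by
  obtain ⟨p, v, rfl⟩ := exists_eq_tH_zpow_mul_ι u
  obtain ⟨q, w, hw, hv⟩ := exists_mk_eq_zpow_of_mul 1 (isReduced_toWord (x := v))
  rw [mk_toWord] at hv
  exact ⟨p, q, w, hw, by rw [hv, ι.map_mul, ι.map_zpow, ι_of_one, mul_assoc]⟩

theorem noLeadB_one : NoLeadB 1 := by
  simp [NoLeadB]

theorem NoLeadB.mul_zpow {w : F₂} (hw : NoLeadB w) (hw1 : w ≠ 1) (n : ℤ) :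
    NoLeadB (w * of 1 ^ n) := by
  unfold NoLeadB
  rwa [head?_toWord_mul_zpow_of 1 hw1 hw]

/-- For any `π : H → ℤ` reading off the exponent `q` in the normal form `t^p · b^q · ι(w)`:
the restriction of `π` to any coset `u⟨b⟩` is either a translation or constant; moreover
the coset `⟨b⟩` itself falls into the translation case, i.e. `π(bⁿ) = n`. -/
theorem pi_coset_translation_or_constant (π : HGrp → ℤ)
    (hπ : ∀ (p q : ℤ) (w : F₂), NoLeadB w → π (tH ^ p * bH ^ q * ι w) = q) :
    (∀ u : HGrp,
      (∀ n : ℤ, π (u * bH ^ n) = π u + n) ∨ (∀ n : ℤ, π (u * bH ^ n) = π u)) ∧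
    (∀ n : ℤ, π (bH ^ n) = n) := by
  refine ⟨fun u => ?_, fun n => by simpa using hπ 0 n 1 noLeadB_one⟩
  obtain ⟨p, q, w, hw, rfl⟩ := exists_normal_form u
  by_cases hw1 : w = 1
  · subst hw1
    left
    intro n
    have hu : tH ^ p * bH ^ q * ι 1 * bH ^ n = tH ^ p * bH ^ (q + n) * ι 1 := by
      simp [zpow_add, mul_assoc]
    rw [hu, hπ _ _ _ noLeadB_one, hπ _ _ _ noLeadB_one]
  · right
    intro n
    have hu : tH ^ p * bH ^ q * ι w * bH ^ n = tH ^ p * bH ^ q * ι (w * of 1 ^ n) := by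
      simp [mul_assoc]
    rw [hu, hπ _ _ _ (hw.mul_zpow hw1 n), hπ _ _ _ hw]
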